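/- Let p be a polynomial, f a polynomial vector field, and x(t) the solution of ẋ = f(x) with x(0) = x₀. If γ_{p,f}(x₀) = ∞ (i.e., L^k_f p(x₀) = 0 for all k ∈ ℕ), then there exists ε > 0 such that p(x(t)) = 0 for all t ∈ (0, ε). -/

import Mathlib

/-!
The ideal `I` generated by all the `L^k_f p` is stable under `L_f`, because `L_f` is a derivation.
As `I` is finitely generated, say by `g₁, …, gₘ`, stability gives `L_f gᵢ = ∑ⱼ cᵢⱼ gⱼ` with
polynomial `cᵢⱼ`. Along the trajectory, `y(t) = (gᵢ(x(t)))ᵢ` then solves the linear ODE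
`y' = A(t) y` with continuous coefficients `A(t)ᵢⱼ = cᵢⱼ(x(t))` and `y(0) = 0`, so Grönwall's
inequality forces `y ≡ 0` for `t ≥ 0`; in particular `p(x(t)) = 0`. No analyticity is needed.
-/

open MvPolynomial

/-- The Lie derivative of a polynomial `p` along the polynomial vector field `f`:
`⟨∇p, f⟩ = ∑ j, (∂p/∂x_j) * f_j`. -/
noncomputable def lieDeriv {n : ℕ} (f : Fin n → MvPolynomial (Fin n) ℝ)
    (p : MvPolynomial (Fin n) ℝ) : MvPolynomial (Fin n) ℝ :=
  ∑ j, MvPolynomial.pderiv j p * f j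

/-- Iterated Lie derivatives: `lieIter f k p = L^k_f p`. -/
noncomputable def lieIter {n : ℕ} (f : Fin n → MvPolynomial (Fin n) ℝ)
    (k : ℕ) (p : MvPolynomial (Fin n) ℝ) : MvPolynomial (Fin n) ℝ :=
  match k with
  | 0 => p
  | k + 1 => lieDeriv f (lieIter f k p)

open Set Matrix

theorem Matrix.eq_zero_of_hasDerivWithinAt_mulVec_of_eq_zero_right {ι : Type*} [Fintype ι]
    {A : ℝ → Matrix ι ι ℝ} {y : ℝ → ι → ℝ} {a b : ℝ} (hA : ContinuousOn A (Icc a b))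
    (hy : ContinuousOn y (Icc a b))
    (hy' : ∀ t ∈ Ico a b, HasDerivWithinAt y (A t *ᵥ y t) (Ici t) t) (ha : y a = 0) :
    ∀ t ∈ Icc a b, y t = 0 := by
  let _ := Matrix.linftyOpNormedAddCommGroup (m := ι) (n := ι) (α := ℝ)
  obtain ⟨K, hK⟩ := isCompact_Icc.exists_bound_of_continuousOn hA
  refine eq_zero_of_abs_deriv_le_mul_abs_self_of_eq_zero_right (K := K) hy hy' ha fun t ht => ?_
  exact (linfty_opNorm_mulVec _ _).trans
    (mul_le_mul_of_nonneg_right (hK t (Ico_subset_Icc_self ht)) (norm_nonneg _))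

theorem Derivation.map_mem_ideal_span {R A : Type*} [CommSemiring R] [CommRing A] [Algebra R A]
    (D : Derivation R A A) {S : Set A} (hS : ∀ s ∈ S, D s ∈ Ideal.span S) {q : A}
    (hq : q ∈ Ideal.span S) : D q ∈ Ideal.span S := by
  induction hq using Submodule.span_induction with
  | mem s hs => exact hS s hs
  | zero => simp
  | add q r _ _ hq hr => simpa using Ideal.add_mem _ hq hr
  | smul c q hq hDq =>
    rw [smul_eq_mul, Derivation.leibniz]
    exact Ideal.add_mem _ (Ideal.mul_mem_left _ _ hDq) (Ideal.mul_mem_right _ _ hq)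

section LieDerivative

variable {n : ℕ} (f : Fin n → MvPolynomial (Fin n) ℝ)

noncomputable def lieDerivation : Derivation ℝ (MvPolynomial (Fin n) ℝ) (MvPolynomial (Fin n) ℝ) :=
  ∑ j, f j • pderiv j

theorem lieDerivation_apply (q : MvPolynomial (Fin n) ℝ) : lieDerivation f q = lieDeriv f q := by
  rw [lieDerivation, ← Derivation.coeFnAddMonoidHom_apply, map_sum, Finset.sum_apply]
  simp [lieDeriv, mul_comm]

theorem lieDeriv_X (i : Fin n) : lieDeriv f (X i) = f i := by
  simp [lieDeriv, pderiv_X, Pi.single_apply]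

theorem lieDeriv_C (r : ℝ) : lieDeriv f (C r) = 0 := by
  rw [← lieDerivation_apply, ← algebraMap_eq, Derivation.map_algebraMap]

theorem lieDeriv_add (q r : MvPolynomial (Fin n) ℝ) :
    lieDeriv f (q + r) = lieDeriv f q + lieDeriv f r := by
  simp only [← lieDerivation_apply, map_add]

theorem lieDeriv_mul (q r : MvPolynomial (Fin n) ℝ) :
    lieDeriv f (q * r) = q * lieDeriv f r + r * lieDeriv f q := by
  simp only [← lieDerivation_apply, Derivation.leibniz, smul_eq_mul]

variable {f}

theorem hasDerivAt_eval_lieDeriv {x : ℝ → Fin n → ℝ} {t : ℝ}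
    (hx : ∀ i, HasDerivAt (fun s => x s i) (eval (x t) (f i)) t) (q : MvPolynomial (Fin n) ℝ) :
    HasDerivAt (fun s => eval (x s) q) (eval (x t) (lieDeriv f q)) t := by
  induction q using MvPolynomial.induction_on with
  | C r => simpa [lieDeriv_C] using hasDerivAt_const t r
  | add q r hq hr => simpa [lieDeriv_add] using hq.fun_add hr
  | mul_X q i hq =>
    simp only [map_mul, eval_X]
    refine (hq.fun_mul (hx i)).congr_deriv ?_
    simp only [lieDeriv_mul, lieDeriv_X, map_add, map_mul, eval_X]
    ring

end LieDerivative

theorem mem_zeroLocus_of_lieDeriv_mem {n : ℕ} {f : Fin n → MvPolynomial (Fin n) ℝ}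
    {I : Ideal (MvPolynomial (Fin n) ℝ)} (hI : ∀ q ∈ I, lieDeriv f q ∈ I)
    {x : ℝ → Fin n → ℝ} {a b : ℝ}
    (hx : ∀ t ∈ Icc a b, ∀ i, HasDerivAt (fun s => x s i) (eval (x t) (f i)) t)
    (ha : x a ∈ zeroLocus ℝ I) : ∀ t ∈ Icc a b, x t ∈ zeroLocus ℝ I := by
  obtain ⟨m, g, rfl⟩ := Submodule.fg_iff_exists_fin_generating_family.mp (IsNoetherian.noetherian I)
  choose c hc using fun i => (Submodule.mem_span_range_iff_exists_fun _).mp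
    (hI (g i) (Submodule.subset_span ⟨i, rfl⟩))
  have hxc : ContinuousOn x (Icc a b) := continuousOn_pi.mpr fun i t ht =>
    (hx t ht i).continuousAt.continuousWithinAt
  set y : ℝ → Fin m → ℝ := fun t i => eval (x t) (g i)
  set A : ℝ → Matrix (Fin m) (Fin m) ℝ := fun t => Matrix.of fun i j => eval (x t) (c i j)
  have hy' : ∀ t ∈ Icc a b, HasDerivAt y (A t *ᵥ y t) t := fun t ht =>
    hasDerivAt_pi.mpr fun i => (hasDerivAt_eval_lieDeriv (hx t ht) (g i)).congr_deriv <| by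
      simp [← hc i, mulVec, dotProduct, A, y]
  have hy0 := Matrix.eq_zero_of_hasDerivWithinAt_mulVec_of_eq_zero_right (A := A) (y := y)
    (continuousOn_pi.mpr fun i => continuousOn_pi.mpr fun j =>
      (continuous_eval (c i j)).comp_continuousOn hxc)
    (continuousOn_pi.mpr fun i => (continuous_eval (g i)).comp_continuousOn hxc)
    (fun t ht => (hy' t (Ico_subset_Icc_self ht)).hasDerivWithinAt)
    (funext fun i => by simp_all [zeroLocus_span, y])
  intro t ht
  simpa [zeroLocus_span, funext_iff, y] using hy0 t ht

/-- If all Lie derivatives of `p` along `f` vanish at `x₀` (infinite pointwise rank),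
then `p` vanishes along the trajectory for small positive time. -/
theorem infinite_rank_implies_locally_zero
    {n : ℕ} (f : Fin n → MvPolynomial (Fin n) ℝ) (p : MvPolynomial (Fin n) ℝ)
    (a b : ℝ) (ha : a < 0) (hb : 0 < b)
    (x : ℝ → Fin n → ℝ) (x₀ : Fin n → ℝ)
    (hx0 : x 0 = x₀)
    (hode : ∀ t ∈ Set.Ioo a b, ∀ i : Fin n,
      HasDerivAt (fun s => x s i) (MvPolynomial.eval (x t) (f i)) t)
    (hzero : ∀ k : ℕ, MvPolynomial.eval x₀ (lieIter f k p) = 0) :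
    ∃ ε > 0, ∀ t ∈ Set.Ioo (0:ℝ) ε, MvPolynomial.eval (x t) p = 0 := by
  have hsolution : ∀ t ∈ Icc 0 (b / 2), ∀ i, HasDerivAt (fun s => x s i) (eval (x t) (f i)) t :=
    fun t ht => hode t ⟨by linarith [ht.1], by linarith [ht.2]⟩
  have hstable : ∀ q ∈ Ideal.span (range fun k => lieIter f k p),
      lieDeriv f q ∈ Ideal.span (range fun k => lieIter f k p) := by
    simp_rw [← lieDerivation_apply]
    refine fun q => (lieDerivation f).map_mem_ideal_span ?_
    rintro _ ⟨k, rfl⟩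
    exact lieDerivation_apply f _ ▸ Ideal.subset_span ⟨k + 1, rfl⟩
  have hinvariant := mem_zeroLocus_of_lieDeriv_mem hstable hsolution
    (by simpa [zeroLocus_span, hx0] using hzero)
  exact ⟨b / 2, by positivity, fun t ht =>
    hinvariant t (Ioo_subset_Icc_self ht) p (Ideal.subset_span ⟨0, rfl⟩)⟩
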